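/- There exists a constant D_s > 0, depending only on s with 0 < s ≤ 1/2, such that for any zero-mean finite Fourier sum w on T³, the convolution sum Σ_{n,k} |ŵ_k| |n−k| |ŵ_{n−k}| |ŵ_n| |n|^{2+2s} is bounded by (D_s/2) ‖w‖³_{s+3/2}, where ‖w‖²_q = Σ_{n≠0} |ŵ_n|² |n|^{2q}. -/
import Mathlib


/-- Euclidean norm of an integer lattice vector in ℤ³. -/
noncomputable def latticeNorm (n : Fin 3 → ℤ) : ℝ :=
  Real.sqrt (∑ i, ((n i : ℝ)) ^ 2)

namespace TriAux

lemma latticeNorm_nonneg (n : Fin 3 → ℤ) : 0 ≤ latticeNorm n := Real.sqrt_nonneg _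

lemma latticeNorm_zero : latticeNorm 0 = 0 := by simp [latticeNorm]

lemma abs_le_latticeNorm (n : Fin 3 → ℤ) (i : Fin 3) : |(n i : ℝ)| ≤ latticeNorm n := by
  rw [← Real.sqrt_sq_eq_abs]
  exact Real.sqrt_le_sqrt (Finset.single_le_sum (fun j _ => sq_nonneg ((n j : ℝ)))
    (Finset.mem_univ i))

lemma one_le_latticeNorm {n : Fin 3 → ℤ} (hn : n ≠ 0) : 1 ≤ latticeNorm n := by
  obtain ⟨i, hi⟩ := Function.ne_iff.mp hn
  refine le_trans ?_ (abs_le_latticeNorm n i)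
  have : (1 : ℤ) ≤ |n i| := Int.one_le_abs hi
  exact_mod_cast this

lemma latticeNorm_triangle (a b : Fin 3 → ℤ) :
    latticeNorm (a + b) ≤ latticeNorm a + latticeNorm b := by
  have hexp : ∑ i, (((a + b) i : ℝ)) ^ 2
      = (∑ i, ((a i : ℝ)) ^ 2) + 2 * (∑ i, (a i : ℝ) * (b i : ℝ))
        + (∑ i, ((b i : ℝ)) ^ 2) := by
    simp only [Fin.sum_univ_three, Pi.add_apply, Int.cast_add]
    ring
  set A := ∑ i, ((a i : ℝ)) ^ 2 with hA
  set B := ∑ i, ((b i : ℝ)) ^ 2 with hB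
  have hA0 : 0 ≤ A := Finset.sum_nonneg fun _ _ => sq_nonneg _
  have hB0 : 0 ≤ B := Finset.sum_nonneg fun _ _ => sq_nonneg _
  have hcs : (∑ i, (a i : ℝ) * (b i : ℝ)) ≤ Real.sqrt A * Real.sqrt B := by
    have h1 := Finset.sum_mul_sq_le_sq_mul_sq Finset.univ
      (fun i => (a i : ℝ)) (fun i => (b i : ℝ))
    calc (∑ i, (a i : ℝ) * (b i : ℝ)) ≤ |∑ i, (a i : ℝ) * (b i : ℝ)| := le_abs_self _
      _ = Real.sqrt ((∑ i, (a i : ℝ) * (b i : ℝ)) ^ 2) := (Real.sqrt_sq_eq_abs _).symm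
      _ ≤ Real.sqrt (A * B) := Real.sqrt_le_sqrt h1
      _ = Real.sqrt A * Real.sqrt B := Real.sqrt_mul hA0 B
  have hsq : A + 2 * (∑ i, (a i : ℝ) * (b i : ℝ)) + B
      ≤ (Real.sqrt A + Real.sqrt B) ^ 2 := by
    have sA : Real.sqrt A ^ 2 = A := Real.sq_sqrt hA0
    have sB : Real.sqrt B ^ 2 = B := Real.sq_sqrt hB0
    nlinarith [hcs]
  show Real.sqrt (∑ i, (((a + b) i : ℝ)) ^ 2) ≤ Real.sqrt A + Real.sqrt B
  rw [hexp]
  calc Real.sqrt (A + 2 * (∑ i, (a i : ℝ) * (b i : ℝ)) + B)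
      ≤ Real.sqrt ((Real.sqrt A + Real.sqrt B) ^ 2) := Real.sqrt_le_sqrt hsq
    _ = Real.sqrt A + Real.sqrt B := Real.sqrt_sq (by positivity)

private def e3 : (Fin 3 → ℤ) ≃ ℤ × (ℤ × ℤ) where
  toFun k := (k 0, (k 1, k 2))
  invFun v := ![v.1, v.2.1, v.2.2]
  left_inv k := by funext i; fin_cases i <;> rfl
  right_inv v := rfl

lemma summable_aux {p : ℝ} (hp : 1 < p) :
    Summable fun n : ℤ => (1 + |(n : ℝ)|) ^ (-p) := by
  have h0 : Summable fun n : ℕ => ((n : ℝ)) ^ (-p) :=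
    Real.summable_nat_rpow.mpr (by linarith)
  have hnat : Summable fun n : ℕ => (1 + (n : ℝ)) ^ (-p) := by
    have h1 := (summable_nat_add_iff 1).mpr h0
    exact h1.congr fun n => by push_cast; ring_nf
  apply Summable.of_nat_of_neg
  · exact hnat.congr fun n => by norm_num
  · exact hnat.congr fun n => by push_cast; norm_num

set_option maxHeartbeats 1000000 in
lemma summable_latticeNorm_rpow {q : ℝ} (hq : 3 < q) :
    Summable fun k : Fin 3 → ℤ => latticeNorm k ^ (-q) := by
  have hq0 : 0 < q := by linarith
  set p : ℝ := q / 3 with hp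
  have hp1 : 1 < p := by rw [hp]; linarith
  have hg := summable_aux hp1
  set g : ℤ → ℝ := fun n => (1 + |(n : ℝ)|) ^ (-p) with hgdef
  have hgnn : ∀ n, 0 ≤ g n := fun n => Real.rpow_nonneg (by positivity) _
  have h2 : Summable fun v : ℤ × ℤ => g v.1 * g v.2 :=
    hg.mul_of_nonneg hg hgnn hgnn
  have h3 : Summable fun v : ℤ × (ℤ × ℤ) => g v.1 * (g v.2.1 * g v.2.2) :=
    hg.mul_of_nonneg h2 hgnn (fun v => mul_nonneg (hgnn _) (hgnn _))
  have h4 : Summable fun k : Fin 3 → ℤ => g (k 0) * (g (k 1) * g (k 2)) :=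
    e3.summable_iff.mpr h3
  apply Summable.of_nonneg_of_le (fun k => Real.rpow_nonneg (latticeNorm_nonneg k) _) ?_
    (h4.mul_left ((2 : ℝ) ^ q))
  intro k
  by_cases hk : k = 0
  · subst hk
    rw [latticeNorm_zero, Real.zero_rpow (neg_ne_zero.mpr hq0.ne')]
    positivity
  · set M := latticeNorm k with hM
    have hM1 : 1 ≤ M := one_le_latticeNorm hk
    have hM0 : (0 : ℝ) < M := by linarith
    have hfac : ∀ i, 1 + |(k i : ℝ)| ≤ 2 * M := by
      intro i
      have := abs_le_latticeNorm k i
      rw [← hM] at this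
      linarith
    have hP1 : ∀ i, (0:ℝ) < 1 + |(k i : ℝ)| := fun i => by positivity
    have hprod : (1 + |(k 0 : ℝ)|) * ((1 + |(k 1 : ℝ)|) * (1 + |(k 2 : ℝ)|)) ≤
        (2 * M) * ((2 * M) * (2 * M)) := by
      have h0 := hfac 0; have h1 := hfac 1; have h2 := hfac 2
      have e0 := hP1 0; have e1 := hP1 1; have e2 := hP1 2
      have i1 : (1 + |(k 1 : ℝ)|) * (1 + |(k 2 : ℝ)|) ≤ (2 * M) * (2 * M) :=
        mul_le_mul h1 h2 e2.le (by linarith)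
      exact mul_le_mul h0 i1 (by positivity) (by linarith)
    have key : M ^ (-q) ≤ (2:ℝ)^q *
        ((1 + |(k 0 : ℝ)|) * ((1 + |(k 1 : ℝ)|) * (1 + |(k 2 : ℝ)|))) ^ (-p) := by
      have hstep : ((2 * M) * ((2 * M) * (2 * M))) ^ (-p) ≤
          ((1 + |(k 0 : ℝ)|) * ((1 + |(k 1 : ℝ)|) * (1 + |(k 2 : ℝ)|))) ^ (-p) :=
        Real.rpow_le_rpow_of_nonpos (by positivity) hprod (by linarith)
      have hval : ((2 * M) * ((2 * M) * (2 * M))) ^ (-p) = (2:ℝ)^(-q) * M ^ (-q) := by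
        have e1 : (2 * M) * ((2 * M) * (2 * M)) = (2 * M) ^ (3 : ℕ) := by ring
        rw [e1, ← Real.rpow_natCast (2 * M) 3, ← Real.rpow_mul (by positivity)]
        have e2 : ((3 : ℕ) : ℝ) * (-p) = -q := by rw [hp]; push_cast; ring
        rw [e2, Real.mul_rpow (by norm_num) hM0.le]
      calc M ^ (-q) = (2:ℝ)^q * ((2:ℝ)^(-q) * M ^ (-q)) := by
            rw [← mul_assoc, ← Real.rpow_add (by norm_num : (0:ℝ) < 2)]
            simp
        _ = (2:ℝ)^q * ((2 * M) * ((2 * M) * (2 * M))) ^ (-p) := by rw [hval]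
        _ ≤ _ := mul_le_mul_of_nonneg_left hstep (by positivity)
    refine key.trans (le_of_eq ?_)
    congr 1
    rw [hgdef]
    simp only
    rw [Real.mul_rpow (hP1 0).le (by positivity), Real.mul_rpow (hP1 1).le (hP1 2).le]

lemma two_rpow_le_four {t : ℝ} (ht : t ≤ 2) : (2:ℝ) ^ t ≤ 4 := by
  calc (2:ℝ) ^ t ≤ (2:ℝ) ^ ((2:ℕ):ℝ) :=
        Real.rpow_le_rpow_of_exponent_le one_le_two (by push_cast; linarith)
    _ = (2:ℝ) ^ (2:ℕ) := Real.rpow_natCast 2 2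
    _ = 4 := by norm_num

lemma pow_split {t N K M : ℝ} (ht0 : 0 ≤ t) (ht2 : t ≤ 2)
    (hK : 1 ≤ K) (hM : 1 ≤ M) (hN0 : 0 ≤ N) (htri : N ≤ M + K) :
    N ^ t ≤ 4 * (M ^ t + K ^ t) := by
  have hK0 : (0:ℝ) < K := by linarith
  have hM0 : (0:ℝ) < M := by linarith
  have h1 : N ^ t ≤ (M + K) ^ t := Real.rpow_le_rpow hN0 htri ht0
  rcases le_total M K with hMK | hKM
  · have h2 : (M + K) ^ t ≤ (2 * K) ^ t :=
      Real.rpow_le_rpow (by linarith) (by linarith) ht0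
    have h3 : (2 * K) ^ t = (2:ℝ) ^ t * K ^ t := Real.mul_rpow (by norm_num) hK0.le
    have h4 : (2:ℝ) ^ t * K ^ t ≤ 4 * K ^ t :=
      mul_le_mul_of_nonneg_right (two_rpow_le_four ht2) (Real.rpow_nonneg hK0.le t)
    have h5 : 0 ≤ M ^ t := Real.rpow_nonneg hM0.le t
    linarith
  · have h2 : (M + K) ^ t ≤ (2 * M) ^ t :=
      Real.rpow_le_rpow (by linarith) (by linarith) ht0
    have h3 : (2 * M) ^ t = (2:ℝ) ^ t * M ^ t := Real.mul_rpow (by norm_num) hM0.le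
    have h4 : (2:ℝ) ^ t * M ^ t ≤ 4 * M ^ t :=
      mul_le_mul_of_nonneg_right (two_rpow_le_four ht2) (Real.rpow_nonneg hM0.le t)
    have h5 : 0 ≤ K ^ t := Real.rpow_nonneg hK0.le t
    linarith

lemma conv_bound {s q K M : ℝ} (hs0 : 0 < s) (hq : q = 3 + 2 * s)
    (hK : 1 ≤ K) (hM : M = 0 ∨ 1 ≤ M) :
    K ^ (-(2:ℝ)) * M ^ (-(1 + 2 * s)) ≤ K ^ (-q) + M ^ (-q) := by
  have hK0 : (0:ℝ) < K := by linarith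
  rcases hM with hM | hM
  · subst hM
    rw [Real.zero_rpow (by intro h; simp at h; linarith), mul_zero]
    exact add_nonneg (Real.rpow_nonneg hK0.le _) (Real.rpow_nonneg (le_refl 0) _)
  · have hM0 : (0:ℝ) < M := by linarith
    rcases le_total K M with hKM | hMK
    · have h1 : M ^ (-(1 + 2 * s)) ≤ K ^ (-(1 + 2 * s)) :=
        Real.rpow_le_rpow_of_nonpos hK0 hKM (by linarith)
      calc K ^ (-(2:ℝ)) * M ^ (-(1 + 2 * s)) ≤ K ^ (-(2:ℝ)) * K ^ (-(1 + 2 * s)) :=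
            mul_le_mul_of_nonneg_left h1 (Real.rpow_nonneg hK0.le _)
        _ = K ^ (-q) := by
            rw [← Real.rpow_add hK0]
            congr 1
            rw [hq]; ring
        _ ≤ K ^ (-q) + M ^ (-q) := le_add_of_nonneg_right (Real.rpow_nonneg hM0.le _)
    · have h1 : K ^ (-(2:ℝ)) ≤ M ^ (-(2:ℝ)) :=
        Real.rpow_le_rpow_of_nonpos hM0 hMK (by norm_num)
      calc K ^ (-(2:ℝ)) * M ^ (-(1 + 2 * s)) ≤ M ^ (-(2:ℝ)) * M ^ (-(1 + 2 * s)) :=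
            mul_le_mul_of_nonneg_right h1 (Real.rpow_nonneg hM0.le _)
        _ = M ^ (-q) := by
            rw [← Real.rpow_add hM0]
            congr 1
            rw [hq]; ring
        _ ≤ K ^ (-q) + M ^ (-q) := le_add_of_nonneg_left (Real.rpow_nonneg hK0.le _)

lemma term_bound {s q N K M : ℝ} (hs0 : 0 < s) (hs1 : s ≤ 1/2) (hq : q = 3 + 2 * s)
    (hN : 1 ≤ N) (hK : 1 ≤ K) (hM : 1 ≤ M) (htri : N ≤ M + K) :
    M * N ^ ((2:ℝ) + 2 * s) ≤
      2 * Real.sqrt (K ^ (-q) + K ^ (-(2:ℝ)) * M ^ (-(1 + 2 * s))) *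
        (N ^ (s + 3/2) * (K ^ (s + 3/2) * M ^ (s + 3/2))) := by
  have hN0 : (0:ℝ) < N := by linarith
  have hK0 : (0:ℝ) < K := by linarith
  have hM0 : (0:ℝ) < M := by linarith
  set G : ℝ := K ^ (-q) + K ^ (-(2:ℝ)) * M ^ (-(1 + 2 * s)) with hG
  have hG0 : 0 ≤ G := by
    rw [hG]
    exact add_nonneg (Real.rpow_nonneg hK0.le _)
      (mul_nonneg (Real.rpow_nonneg hK0.le _) (Real.rpow_nonneg hM0.le _))
  have key3 : N ^ (2*s+1) ≤ 4 * (M ^ (2*s+1) + K ^ (2*s+1)) :=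
    pow_split (by linarith) (by linarith) hK hM hN0.le htri
  have eGexp : 4 * G * (K ^ (2*s+3) * M ^ (2*s+1)) = 4 * (M ^ (2*s+1) + K ^ (2*s+1)) := by
    have e1 : K ^ (-q) * K ^ (2*s+3) = 1 := by
      rw [← Real.rpow_add hK0, show -q + (2*s+3) = 0 by rw [hq]; ring, Real.rpow_zero]
    have e2 : K ^ (-(2:ℝ)) * K ^ (2*s+3) = K ^ (2*s+1) := by
      rw [← Real.rpow_add hK0]
      congr 1; ring
    have e3 : M ^ (-(1 + 2*s)) * M ^ (2*s+1) = 1 := by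
      rw [← Real.rpow_add hM0, show -(1+2*s) + (2*s+1) = 0 by ring, Real.rpow_zero]
    rw [hG]
    linear_combination (4 * M ^ (2*s+1)) * e1
      + (4 * (M ^ (-(1 + 2*s)) * M ^ (2*s+1))) * e2 + (4 * K ^ (2*s+1)) * e3
  have key2 : N ^ (s + 1/2) ≤ 2 * Real.sqrt G * (K ^ (s + 3/2) * M ^ (s + 1/2)) := by
    have hsq : (N ^ (s + 1/2)) ^ 2 ≤
        (2 * Real.sqrt G * (K ^ (s + 3/2) * M ^ (s + 1/2))) ^ 2 := by
      have eN : (N ^ (s + 1/2)) ^ 2 = N ^ (2*s+1) := by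
        rw [sq, ← Real.rpow_add hN0]
        congr 1; ring
      have eK : (K ^ (s + 3/2)) ^ 2 = K ^ (2*s+3) := by
        rw [sq, ← Real.rpow_add hK0]
        congr 1; ring
      have eM : (M ^ (s + 1/2)) ^ 2 = M ^ (2*s+1) := by
        rw [sq, ← Real.rpow_add hM0]
        congr 1; ring
      have eR : (2 * Real.sqrt G * (K ^ (s + 3/2) * M ^ (s + 1/2))) ^ 2
          = 4 * (Real.sqrt G ^ 2) * ((K ^ (s + 3/2)) ^ 2 * (M ^ (s + 1/2)) ^ 2) := by
        ring
      rw [eN, eR, Real.sq_sqrt hG0, eK, eM, eGexp]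
      exact key3
    have h1 : 0 ≤ N ^ (s + 1/2) := Real.rpow_nonneg hN0.le _
    have h2 : 0 ≤ 2 * Real.sqrt G * (K ^ (s + 3/2) * M ^ (s + 1/2)) := by
      have := Real.sqrt_nonneg G
      have := Real.rpow_nonneg hK0.le (s + 3/2)
      have := Real.rpow_nonneg hM0.le (s + 1/2)
      positivity
    have := Real.sqrt_le_sqrt hsq
    rwa [Real.sqrt_sq h1, Real.sqrt_sq h2] at this
  have eN2 : N ^ ((2:ℝ) + 2 * s) = N ^ (s + 3/2) * N ^ (s + 1/2) := by
    rw [← Real.rpow_add hN0]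
    congr 1; ring
  have eM2 : M ^ (s + 3/2) = M * M ^ (s + 1/2) := by
    rw [show s + 3/2 = 1 + (s + 1/2) by ring, Real.rpow_add hM0, Real.rpow_one]
  calc M * N ^ ((2:ℝ) + 2 * s) = (M * N ^ (s + 3/2)) * N ^ (s + 1/2) := by
        rw [eN2]; ring
    _ ≤ (M * N ^ (s + 3/2)) * (2 * Real.sqrt G * (K ^ (s + 3/2) * M ^ (s + 1/2))) := by
        apply mul_le_mul_of_nonneg_left key2
        have := Real.rpow_nonneg hN0.le (s + 3/2)
        positivity
    _ = 2 * Real.sqrt G * (N ^ (s + 3/2) * (K ^ (s + 3/2) * M ^ (s + 3/2))) := by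
        rw [eM2]; ring

end TriAux

/-- The key trilinear estimate of the Euler energy balance: for `0 < s ≤ 1/2`
there is a constant `D_s > 0`, independent of `w`, such that for every
zero-mean finite Fourier sum `w`,
`Σ_{n,k} |ŵ_k| |n−k| |ŵ_{n−k}| |ŵ_n| |n|^{2+2s} ≤ (D_s/2) ‖w‖³_{s+3/2}`. -/
theorem trilinear_estimate (s : ℝ) (hs0 : 0 < s) (hs1 : s ≤ 1 / 2) :
    ∃ D : ℝ, 0 < D ∧
      ∀ what : (Fin 3 → ℤ) → EuclideanSpace ℂ (Fin 3),
        what 0 = 0 → (Function.support what).Finite →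
        (∑' p : (Fin 3 → ℤ) × (Fin 3 → ℤ),
            ‖what p.2‖ * latticeNorm (p.1 - p.2) * ‖what (p.1 - p.2)‖ *
              ‖what p.1‖ * latticeNorm p.1 ^ ((2 : ℝ) + 2 * s)) ≤
          D / 2 * (∑' n : Fin 3 → ℤ,
              ‖what n‖ ^ 2 * latticeNorm n ^ (2 * (s + 3 / 2))) ^ ((3 : ℝ) / 2) := by
  classical
  have hq3 : (3:ℝ) < 3 + 2 * s := by linarith
  set q : ℝ := 3 + 2 * s with hq
  have hsum := TriAux.summable_latticeNorm_rpow hq3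
  set σ : ℝ := ∑' k : Fin 3 → ℤ, latticeNorm k ^ (-q) with hσdef
  have hσ0 : 0 ≤ σ :=
    tsum_nonneg fun k => Real.rpow_nonneg (TriAux.latticeNorm_nonneg k) _
  refine ⟨2 * Real.sqrt (12 * σ) + 2, by positivity, ?_⟩
  intro what h0 hfin
  set F : Finset (Fin 3 → ℤ) := hfin.toFinset with hF
  have hmemF : ∀ n : Fin 3 → ℤ, n ∈ F ↔ what n ≠ 0 := fun n => by
    simp [hF, Function.mem_support]
  have hnotF : ∀ {n}, n ∉ F → ‖what n‖ = 0 := by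
    intro n hn
    rw [norm_eq_zero]
    by_contra hcon
    exact hn ((hmemF n).mpr hcon)
  have hneF : ∀ {n}, n ∈ F → n ≠ 0 := by
    intro n hn
    rintro rfl
    exact (hmemF 0).mp hn h0
  set b : (Fin 3 → ℤ) → ℝ := fun n => ‖what n‖ * latticeNorm n ^ (s + 3/2) with hb
  have hbnn : ∀ n, 0 ≤ b n := fun n =>
    mul_nonneg (norm_nonneg _) (Real.rpow_nonneg (TriAux.latticeNorm_nonneg n) _)
  have hb0 : ∀ {n}, n ∉ F → b n = 0 := by
    intro n hn
    rw [hb]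
    simp [hnotF hn]
  set X : ℝ := ∑ n ∈ F, b n ^ 2 with hX
  have hX0 : 0 ≤ X := Finset.sum_nonneg fun n _ => sq_nonneg _
  set T : (Fin 3 → ℤ) × (Fin 3 → ℤ) → ℝ := fun p =>
    ‖what p.2‖ * latticeNorm (p.1 - p.2) * ‖what (p.1 - p.2)‖ * ‖what p.1‖ *
      latticeNorm p.1 ^ ((2 : ℝ) + 2 * s) with hT
  set G : (Fin 3 → ℤ) × (Fin 3 → ℤ) → ℝ := fun p =>
    latticeNorm p.2 ^ (-q) +
      latticeNorm p.2 ^ (-(2:ℝ)) * latticeNorm (p.1 - p.2) ^ (-(1 + 2 * s)) with hG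
  have hGnn : ∀ p, 0 ≤ G p := fun p =>
    add_nonneg (Real.rpow_nonneg (TriAux.latticeNorm_nonneg _) _)
      (mul_nonneg (Real.rpow_nonneg (TriAux.latticeNorm_nonneg _) _)
        (Real.rpow_nonneg (TriAux.latticeNorm_nonneg _) _))
  set u : (Fin 3 → ℤ) × (Fin 3 → ℤ) → ℝ := fun p => 2 * b p.1 * Real.sqrt (G p) with hu
  set v : (Fin 3 → ℤ) × (Fin 3 → ℤ) → ℝ := fun p => b p.2 * b (p.1 - p.2) with hv
  have hunn : ∀ p, 0 ≤ u p := fun p => by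
    rw [hu]
    have := hbnn p.1
    have := Real.sqrt_nonneg (G p)
    positivity
  have hvnn : ∀ p, 0 ≤ v p := fun p => mul_nonneg (hbnn _) (hbnn _)
  -- the left tsum is a finite sum
  have hLHS : ∑' p : (Fin 3 → ℤ) × (Fin 3 → ℤ), T p = ∑ p ∈ F ×ˢ F, T p := by
    apply tsum_eq_sum
    intro p hp
    rw [Finset.mem_product, not_and_or] at hp
    rw [hT]
    rcases hp with hp | hp
    · simp [hnotF hp]
    · simp [hnotF hp]
  -- the right tsum is X
  have hRHS : (∑' n : Fin 3 → ℤ, ‖what n‖ ^ 2 * latticeNorm n ^ (2 * (s + 3 / 2))) = X := by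
    rw [tsum_eq_sum (s := F) (fun n hn => by simp [hnotF hn]), hX]
    apply Finset.sum_congr rfl
    intro n hn
    have h1 : (1:ℝ) ≤ latticeNorm n := TriAux.one_le_latticeNorm (hneF hn)
    have e : (latticeNorm n ^ (s + 3/2)) ^ 2 = latticeNorm n ^ (2 * (s + 3/2)) := by
      rw [sq, ← Real.rpow_add (by linarith)]
      congr 1; ring
    rw [hb]
    simp only
    rw [mul_pow, e]
  -- pointwise bound
  have hpoint : ∀ p ∈ F ×ˢ F, T p ≤ u p * v p := by
    rintro ⟨n, k⟩ hp
    rw [Finset.mem_product] at hp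
    obtain ⟨hn, hk⟩ := hp
    by_cases hm : what (n - k) = 0
    · have hz : T (n, k) = 0 := by simp [hT, hm]
      rw [hz]
      exact mul_nonneg (hunn _) (hvnn _)
    · have hmne : n - k ≠ 0 := by
        intro hcon
        apply hm
        rw [hcon, h0]
      have hN := TriAux.one_le_latticeNorm (hneF hn)
      have hK := TriAux.one_le_latticeNorm (hneF hk)
      have hM := TriAux.one_le_latticeNorm hmne
      have htri : latticeNorm n ≤ latticeNorm (n - k) + latticeNorm k := by
        have := TriAux.latticeNorm_triangle (n - k) k
        rwa [sub_add_cancel] at this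
      have key := TriAux.term_bound hs0 hs1 hq hN hK hM htri
      have eT : T (n, k) = (‖what k‖ * ‖what (n - k)‖ * ‖what n‖) *
          (latticeNorm (n - k) * latticeNorm n ^ ((2:ℝ) + 2 * s)) := by
        simp only [hT]; ring
      have eUV : u (n, k) * v (n, k) = (‖what k‖ * ‖what (n - k)‖ * ‖what n‖) *
          (2 * Real.sqrt (G (n, k)) * (latticeNorm n ^ (s + 3/2) *
            (latticeNorm k ^ (s + 3/2) * latticeNorm (n - k) ^ (s + 3/2)))) := by
        simp only [hu, hv, hb]; ring
      rw [eT, eUV]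
      apply mul_le_mul_of_nonneg_left _ (by positivity)
      simpa only [hG] using key
  -- Cauchy–Schwarz
  have hfhnn : 0 ≤ ∑ p ∈ F ×ˢ F, u p * v p :=
    Finset.sum_nonneg fun p _ => mul_nonneg (hunn p) (hvnn p)
  have hCS : ∑ p ∈ F ×ˢ F, u p * v p ≤
      Real.sqrt ((∑ p ∈ F ×ˢ F, u p ^ 2) * (∑ p ∈ F ×ˢ F, v p ^ 2)) := by
    rw [← Real.sqrt_sq hfhnn]
    exact Real.sqrt_le_sqrt (Finset.sum_mul_sq_le_sq_mul_sq _ u v)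
  -- bound on shifted partial sums of b²
  have hXany : ∀ S : Finset (Fin 3 → ℤ), (∑ m ∈ S, b m ^ 2) ≤ X := by
    intro S
    have e1 : ∑ m ∈ S.filter (· ∈ F), b m ^ 2 = ∑ m ∈ S, b m ^ 2 :=
      Finset.sum_filter_of_ne (fun m _ hne => by
        by_contra hmF
        exact hne (by rw [hb0 hmF]; norm_num))
    rw [← e1, hX]
    apply Finset.sum_le_sum_of_subset_of_nonneg
    · intro m hm; exact (Finset.mem_filter.mp hm).2
    · intro m _ _; exact sq_nonneg _
  -- bound on the v-sum
  have hvsum : (∑ p ∈ F ×ˢ F, v p ^ 2) ≤ X ^ 2 := by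
    rw [Finset.sum_product]
    calc ∑ n ∈ F, ∑ k ∈ F, v (n, k) ^ 2
        = ∑ k ∈ F, ∑ n ∈ F, v (n, k) ^ 2 := Finset.sum_comm
      _ ≤ ∑ k ∈ F, b k ^ 2 * X := by
          apply Finset.sum_le_sum
          intro k _
          have e : ∀ n, v (n, k) ^ 2 = b k ^ 2 * b (n - k) ^ 2 := fun n => by
            simp only [hv]; ring
          calc ∑ n ∈ F, v (n, k) ^ 2 = ∑ n ∈ F, b k ^ 2 * b (n - k) ^ 2 := by
                exact Finset.sum_congr rfl fun n _ => e n
            _ = b k ^ 2 * ∑ n ∈ F, b (n - k) ^ 2 := by rw [Finset.mul_sum]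
            _ ≤ b k ^ 2 * X := by
                apply mul_le_mul_of_nonneg_left _ (sq_nonneg _)
                have himg : ∑ m ∈ F.image (fun n => n - k), b m ^ 2
                    = ∑ n ∈ F, b (n - k) ^ 2 :=
                  Finset.sum_image (fun x _ y _ hxy => sub_left_injective hxy)
                rw [← himg]
                exact hXany _
      _ = X * X := by rw [← Finset.sum_mul, ← hX]
      _ = X ^ 2 := (sq X).symm
  -- bound on the u-sum
  have hGsum : ∀ n ∈ F, (∑ k ∈ F, G (n, k)) ≤ 3 * σ := by
    intro n _
    have h1 : ∑ k ∈ F, latticeNorm k ^ (-q) ≤ σ := by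
      rw [hσdef]
      exact Summable.sum_le_tsum F (fun k _ => Real.rpow_nonneg (TriAux.latticeNorm_nonneg k) _) hsum
    have h2 : ∑ k ∈ F, latticeNorm (n - k) ^ (-q) ≤ σ := by
      have himg : ∑ m ∈ F.image (fun k => n - k), latticeNorm m ^ (-q)
          = ∑ k ∈ F, latticeNorm (n - k) ^ (-q) :=
        Finset.sum_image (fun x _ y _ hxy => sub_right_injective hxy)
      rw [hσdef, ← himg]
      exact Summable.sum_le_tsum _ (fun k _ => Real.rpow_nonneg (TriAux.latticeNorm_nonneg k) _) hsum
    have h3 : ∑ k ∈ F, latticeNorm k ^ (-(2:ℝ)) * latticeNorm (n - k) ^ (-(1 + 2 * s))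
        ≤ σ + σ := by
      calc ∑ k ∈ F, latticeNorm k ^ (-(2:ℝ)) * latticeNorm (n - k) ^ (-(1 + 2 * s))
          ≤ ∑ k ∈ F, (latticeNorm k ^ (-q) + latticeNorm (n - k) ^ (-q)) := by
            apply Finset.sum_le_sum
            intro k hk
            apply TriAux.conv_bound hs0 hq (TriAux.one_le_latticeNorm (hneF hk))
            by_cases hmk : n - k = 0
            · left; rw [hmk, TriAux.latticeNorm_zero]
            · right; exact TriAux.one_le_latticeNorm hmk
        _ = (∑ k ∈ F, latticeNorm k ^ (-q)) + ∑ k ∈ F, latticeNorm (n - k) ^ (-q) :=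
            Finset.sum_add_distrib
        _ ≤ σ + σ := add_le_add h1 h2
    calc ∑ k ∈ F, G (n, k)
        = (∑ k ∈ F, latticeNorm k ^ (-q)) +
          ∑ k ∈ F, latticeNorm k ^ (-(2:ℝ)) * latticeNorm (n - k) ^ (-(1 + 2 * s)) := by
          simp only [hG]
          rw [Finset.sum_add_distrib]
      _ ≤ σ + (σ + σ) := add_le_add h1 h3
      _ = 3 * σ := by ring
  have husum : (∑ p ∈ F ×ˢ F, u p ^ 2) ≤ 12 * σ * X := by
    rw [Finset.sum_product]
    have e : ∀ n k, u (n, k) ^ 2 = 4 * b n ^ 2 * G (n, k) := fun n k => by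
      simp only [hu]
      calc (2 * b n * Real.sqrt (G (n, k))) ^ 2
          = 4 * b n ^ 2 * Real.sqrt (G (n, k)) ^ 2 := by ring
        _ = 4 * b n ^ 2 * G (n, k) := by rw [Real.sq_sqrt (hGnn _)]
    calc ∑ n ∈ F, ∑ k ∈ F, u (n, k) ^ 2
        = ∑ n ∈ F, (4 * b n ^ 2) * ∑ k ∈ F, G (n, k) := by
          apply Finset.sum_congr rfl
          intro n _
          rw [Finset.mul_sum]
          exact Finset.sum_congr rfl fun k _ => e n k
      _ ≤ ∑ n ∈ F, (4 * b n ^ 2) * (3 * σ) := by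
          apply Finset.sum_le_sum
          intro n hn
          exact mul_le_mul_of_nonneg_left (hGsum n hn) (by positivity)
      _ = 12 * σ * X := by
          rw [hX, Finset.mul_sum]
          exact Finset.sum_congr rfl fun n _ => by ring
  -- assemble everything
  rw [hLHS, hRHS]
  calc ∑ p ∈ F ×ˢ F, T p
      ≤ ∑ p ∈ F ×ˢ F, u p * v p := Finset.sum_le_sum hpoint
    _ ≤ Real.sqrt ((∑ p ∈ F ×ˢ F, u p ^ 2) * (∑ p ∈ F ×ˢ F, v p ^ 2)) := hCS
    _ ≤ Real.sqrt ((12 * σ * X) * X ^ 2) := by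
        apply Real.sqrt_le_sqrt
        exact mul_le_mul husum hvsum (Finset.sum_nonneg fun p _ => sq_nonneg _)
          (by positivity)
    _ = Real.sqrt (12 * σ) * X ^ ((3:ℝ)/2) := by
        rw [show 12 * σ * X * X ^ 2 = (12 * σ) * X ^ (3:ℕ) by ring,
          Real.sqrt_mul (by positivity)]
        congr 1
        rw [← Real.rpow_natCast X 3, Real.sqrt_eq_rpow, ← Real.rpow_mul hX0]
        norm_num
    _ ≤ (2 * Real.sqrt (12 * σ) + 2) / 2 * X ^ ((3:ℝ)/2) := by
        apply mul_le_mul_of_nonneg_right _ (Real.rpow_nonneg hX0 _)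
        rw [show (2 * Real.sqrt (12 * σ) + 2) / 2 = Real.sqrt (12 * σ) + 1 by ring]
        linarith [Real.sqrt_nonneg (12 * σ)]
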